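/- arXiv:1804.08314 — 7 statements merged into one kernel-verified Lean document; each statement's English description precedes it below -/
import Mathlib

section
/- Let v be a real-valued random variable with values in [vmin, vmax] where 0 ≤ vmin < vmax, and let c ≥ 0. There exists a cdf G supported in [vmin, vmax] such that the net utility U_net(G) = E[Ĝ(v)] − Ĝ(E[v]) is strictly greater than c if and only if c < E[max(0, v − E[v])]. -/
/-!
Since `0 ≤ G ≤ 1`, `Ĝ(x) - Ĝ(m) = ∫_m^x G ≤ max 0 (x - m)`; taking `m = E[v]` and integrating
bounds `U_net(G)` by `E[max 0 (v - E[v])]`. The step cdf `1_{[E[v], ∞)}` attains the bound, and it is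
supported in `[vmin, vmax]` because `E[v]` lies there.
-/

open MeasureTheory Set

/-- A cdf supported in `[vmin, vmax]`: a nondecreasing right-continuous function
`G : ℝ → [0,1]` with `G r = 0` for `r < vmin` and `G r = 1` for `r ≥ vmax`. -/
def IsCdfOn (vmin vmax : ℝ) (G : ℝ → ℝ) : Prop :=
  Monotone G ∧ (∀ r, G r ∈ Icc (0 : ℝ) 1) ∧
    (∀ r, ContinuousWithinAt G (Ici r) r) ∧
    (∀ r, r < vmin → G r = 0) ∧ (∀ r, vmax ≤ r → G r = 1)

/-- `Ĝ(x) := ∫_0^x G(r) dr`. -/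
noncomputable def Ghat (G : ℝ → ℝ) (x : ℝ) : ℝ := ∫ r in (0 : ℝ)..x, G r

section Ghat

variable {G : ℝ → ℝ}

lemma Ghat_sub_Ghat (hG : Monotone G) (a b : ℝ) :
    Ghat G b - Ghat G a = ∫ r in a..b, G r := by
  rw [Ghat, Ghat, sub_eq_iff_eq_add', intervalIntegral.integral_add_adjacent_intervals
    hG.intervalIntegrable hG.intervalIntegrable]

lemma Ghat_mono (hG : Monotone G) (hG0 : ∀ r, 0 ≤ G r) : Monotone (Ghat G) := fun a b hab =>
  sub_nonneg.mp <| Ghat_sub_Ghat hG a b ▸ intervalIntegral.integral_nonneg hab fun r _ => hG0 r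

lemma Ghat_sub_Ghat_le (hG : Monotone G) (hG01 : ∀ r, G r ∈ Icc (0 : ℝ) 1) (a x : ℝ) :
    Ghat G x - Ghat G a ≤ max 0 (x - a) := by
  rcases le_total a x with hax | hxa
  · calc Ghat G x - Ghat G a = ∫ r in a..x, G r := Ghat_sub_Ghat hG a x
      _ ≤ ∫ r in a..x, (1 : ℝ) :=
        intervalIntegral.integral_mono_on hax hG.intervalIntegrable intervalIntegrable_const
          fun r _ => (hG01 r).2
      _ = x - a := by simp
      _ ≤ max 0 (x - a) := le_max_right _ _
  · calc Ghat G x - Ghat G a ≤ 0 :=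
          sub_nonpos.mpr (Ghat_mono hG (fun r => (hG01 r).1) hxa)
      _ ≤ max 0 (x - a) := le_max_left _ _

lemma integrable_Ghat_comp {Ω : Type*} [MeasurableSpace Ω] {μ : Measure Ω} [IsFiniteMeasure μ]
    (hG : Monotone G) (hG0 : ∀ r, 0 ≤ G r) {v : Ω → ℝ} {a b : ℝ}
    (hv : ∀ ω, v ω ∈ Icc a b) (hmv : Measurable v) :
    Integrable (fun ω => Ghat G (v ω)) μ :=
  have hmono := Ghat_mono hG hG0
  .of_mem_Icc (Ghat G a) (Ghat G b) (hmono.measurable.comp hmv).aemeasurable <|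
    ae_of_all _ fun ω => ⟨hmono (hv ω).1, hmono (hv ω).2⟩

end Ghat

lemma monotone_indicator_Ici_one (a : ℝ) : Monotone ((Ici a).indicator (1 : ℝ → ℝ)) := by
  intro r s hrs
  by_cases hr : a ≤ r
  · simp [indicator_of_mem (mem_Ici.mpr hr), indicator_of_mem (mem_Ici.mpr (hr.trans hrs))]
  · simp only [indicator_of_notMem (show r ∉ Ici a from hr)]
    exact indicator_nonneg (fun _ _ => zero_le_one) s

lemma isCdfOn_indicator_Ici {vmin vmax a : ℝ} (ha : a ∈ Icc vmin vmax) :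
    IsCdfOn vmin vmax ((Ici a).indicator 1) := by
  refine ⟨monotone_indicator_Ici_one a, fun r => ?_, fun r => ?_, fun r hr => ?_, fun r hr => ?_⟩
  · by_cases hr : r ∈ Ici a <;> simp [hr]
  · rcases le_or_gt a r with har | hra
    · exact (continuousWithinAt_const (b := (1 : ℝ))).congr
        (fun s hs => indicator_of_mem (mem_Ici.mpr (har.trans hs)) _)
        (indicator_of_mem (mem_Ici.mpr har) _)
    · refine (continuousAt_const (y := (0 : ℝ))).congr ?_ |>.continuousWithinAt
      filter_upwards [Iio_mem_nhds hra] with s hs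
      exact (indicator_of_notMem (notMem_Ici.mpr hs) _).symm
  · exact indicator_of_notMem (notMem_Ici.mpr (hr.trans_le ha.1)) _
  · exact indicator_of_mem (mem_Ici.mpr (ha.2.trans hr)) _

lemma Ghat_indicator_Ici_sub (a x : ℝ) :
    Ghat ((Ici a).indicator 1) x - Ghat ((Ici a).indicator 1) a = max 0 (x - a) := by
  rw [Ghat_sub_Ghat (monotone_indicator_Ici_one a)]
  rcases le_total a x with hax | hxa
  · rw [max_eq_right (sub_nonneg.mpr hax), intervalIntegral.integral_congr (g := fun _ => 1)]
    · simp
    · intro r hr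
      rw [uIcc_of_le hax] at hr
      exact indicator_of_mem (mem_Ici.mpr hr.1) _
  · rw [max_eq_left (sub_nonpos.mpr hxa), intervalIntegral.integral_symm,
      intervalIntegral.integral_of_le hxa, integral_Ioc_eq_integral_Ioo,
      setIntegral_eq_zero_of_forall_eq_zero fun r hr => indicator_of_notMem (notMem_Ici.mpr hr.2) _,
      neg_zero]

theorem exists_truthful_cdf_iff_general
    {Ω : Type*} [MeasurableSpace Ω] (μ : Measure Ω) [IsProbabilityMeasure μ]
    (vmin vmax : ℝ)
    (v : Ω → ℝ) (hv : ∀ ω, v ω ∈ Icc vmin vmax) (hmv : Measurable v)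
    (c : ℝ) :
    (∃ G : ℝ → ℝ, IsCdfOn vmin vmax G ∧
      c < (∫ ω, Ghat G (v ω) ∂μ) - Ghat G (∫ ω, v ω ∂μ))
    ↔ c < ∫ ω, max 0 (v ω - ∫ ω', v ω' ∂μ) ∂μ := by
  set m := ∫ ω', v ω' ∂μ
  have hvint : Integrable v μ := .of_mem_Icc vmin vmax hmv.aemeasurable (ae_of_all _ hv)
  have hm : m ∈ Icc vmin vmax := (convex_Icc _ _).integral_mem isClosed_Icc (ae_of_all _ hv) hvint
  have hint : ∀ G, IsCdfOn vmin vmax G → Integrable (fun ω => Ghat G (v ω)) μ :=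
    fun G hG => integrable_Ghat_comp hG.1 (fun r => (hG.2.1 r).1) hv hmv
  have hnet : ∀ G, IsCdfOn vmin vmax G →
      (∫ ω, Ghat G (v ω) ∂μ) - Ghat G m = ∫ ω, (Ghat G (v ω) - Ghat G m) ∂μ := fun G hG => by
    rw [integral_sub (hint G hG) (integrable_const _), integral_const, probReal_univ, one_smul]
  constructor
  · rintro ⟨G, hG, hlt⟩
    refine hlt.trans_le ?_
    rw [hnet G hG]
    exact integral_mono ((hint G hG).sub (integrable_const _))
      ((integrable_const 0).sup (hvint.sub (integrable_const m)))
      fun ω => Ghat_sub_Ghat_le hG.1 hG.2.1 m (v ω)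
  · intro hlt
    refine ⟨(Ici m).indicator 1, isCdfOn_indicator_Ici hm, ?_⟩
    simpa only [hnet _ (isCdfOn_indicator_Ici hm), Ghat_indicator_Ici_sub] using hlt

/-- There exists a cdf `G` supported in `[vmin, vmax]` whose net utility
`U_net(G) = E[Ĝ(v)] − Ĝ(E[v])` is strictly greater than `c`
if and only if `c < E[max(0, v − E[v])]`. -/
theorem exists_truthful_cdf_iff
    {Ω : Type*} [MeasurableSpace Ω] (μ : Measure Ω) [IsProbabilityMeasure μ]
    (vmin vmax : ℝ) (h0 : 0 ≤ vmin) (h1 : vmin < vmax)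
    (v : Ω → ℝ) (hv : ∀ ω, v ω ∈ Icc vmin vmax) (hmv : Measurable v)
    (c : ℝ) (hc : 0 ≤ c) :
    (∃ G : ℝ → ℝ, IsCdfOn vmin vmax G ∧
      c < (∫ ω, Ghat G (v ω) ∂μ) - Ghat G (∫ ω, v ω ∂μ))
    ↔ c < ∫ ω, max 0 (v ω - ∫ ω', v ω' ∂μ) ∂μ :=
  exists_truthful_cdf_iff_general μ vmin vmax v hv hmv c
end

section
/- Let v be a real-valued random variable with values in [vmin, vmax] where 0 ≤ vmin < vmax. For every cdf G supported in [vmin, vmax], the net utility satisfies E[Ĝ(v)] − Ĝ(E[v]) ≤ E[max(0, v − E[v])]. -/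
open MeasureTheory Set

lemma Ghat_sub_le {G : ℝ → ℝ} (hmono : Monotone G) (hbd : ∀ r, G r ∈ Icc (0:ℝ) 1)
    (x m : ℝ) : Ghat G x - Ghat G m ≤ max 0 (x - m) := by
  have hInt : ∀ a b : ℝ, IntervalIntegrable G MeasureTheory.volume a b :=
    fun a b => hmono.intervalIntegrable
  have key : Ghat G x - Ghat G m = ∫ r in m..x, G r :=
    intervalIntegral.integral_interval_sub_left (hInt 0 x) (hInt 0 m)
  rw [key]
  rcases le_or_gt m x with h | h
  · have h1 : (∫ r in m..x, G r) ≤ ∫ r in m..x, (1:ℝ) :=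
      intervalIntegral.integral_mono_on h (hInt m x) intervalIntegrable_const
        (fun r _ => (hbd r).2)
    simp only [intervalIntegral.integral_const, smul_eq_mul, mul_one] at h1
    exact h1.trans (le_max_right _ _)
  · have h1 : (∫ r in m..x, G r) = -(∫ r in x..m, G r) :=
      (intervalIntegral.integral_symm x m)
    have h2 : (0:ℝ) ≤ ∫ r in x..m, G r :=
      intervalIntegral.integral_nonneg h.le (fun r _ => (hbd r).1)
    rw [h1]
    exact (neg_nonpos.mpr h2).trans (le_max_left _ _)

/-- For every cdf `G` supported in `[vmin, vmax]`, the net utility satisfies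
`E[Ĝ(v)] − Ĝ(E[v]) ≤ E[max(0, v − E[v])]`. -/
theorem net_utility_le
    {Ω : Type*} [MeasurableSpace Ω] (μ : Measure Ω) [IsProbabilityMeasure μ]
    (vmin vmax : ℝ) (h0 : 0 ≤ vmin) (h1 : vmin < vmax)
    (v : Ω → ℝ) (hv : ∀ ω, v ω ∈ Icc vmin vmax) (hmv : Measurable v) :
    ∀ G : ℝ → ℝ, IsCdfOn vmin vmax G →
      (∫ ω, Ghat G (v ω) ∂μ) - Ghat G (∫ ω, v ω ∂μ)
        ≤ ∫ ω, max 0 (v ω - ∫ ω', v ω' ∂μ) ∂μ := by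
  intro G hG
  obtain ⟨hmono, hbd, -, -, -⟩ := hG
  set m : ℝ := ∫ ω, v ω ∂μ with hm
  have hInt : ∀ a b : ℝ, IntervalIntegrable G MeasureTheory.volume a b :=
    fun a b => hmono.intervalIntegrable
  have hcont : Continuous (Ghat G) :=
    intervalIntegral.continuous_primitive hInt 0
  -- integrability of ω ↦ Ghat G (v ω)
  have hf_meas : Measurable fun ω => Ghat G (v ω) := hcont.measurable.comp hmv
  have hGhat_bd : ∀ x : ℝ, x ∈ Icc vmin vmax → ‖Ghat G x‖ ≤ vmax := by
    intro x hx
    have hb : ‖Ghat G x‖ ≤ 1 * |x - 0| := by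
      apply intervalIntegral.norm_integral_le_of_norm_le_const
      intro r _
      rw [Real.norm_eq_abs, abs_le]
      exact ⟨by linarith [(hbd r).1], (hbd r).2⟩
    have hx0 : (0:ℝ) ≤ x := le_trans h0 hx.1
    rw [sub_zero, abs_of_nonneg hx0, one_mul] at hb
    exact hb.trans hx.2
  have hf_int : Integrable (fun ω => Ghat G (v ω)) μ := by
    refine (integrable_const vmax).mono' hf_meas.aestronglyMeasurable ?_
    exact Filter.Eventually.of_forall fun ω => hGhat_bd _ (hv ω)
  -- integrability of ω ↦ max 0 (v ω - m)
  have hg_meas : Measurable fun ω => max 0 (v ω - m) :=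
    (measurable_const.max ((hmv.sub measurable_const)))
  have hg_int : Integrable (fun ω => max 0 (v ω - m)) μ := by
    refine (integrable_const (vmax + |m|)).mono' hg_meas.aestronglyMeasurable ?_
    refine Filter.Eventually.of_forall fun ω => ?_
    have h2 : |v ω - m| ≤ vmax + |m| := by
      have := (hv ω).1
      have := (hv ω).2
      have := abs_sub_abs_le_abs_sub (v ω) m
      have habs : |v ω| ≤ vmax := by
        rw [abs_of_nonneg (le_trans h0 (hv ω).1)]; exact (hv ω).2
      calc |v ω - m| ≤ |v ω| + |m| := abs_sub _ _
        _ ≤ vmax + |m| := by linarith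
    rw [Real.norm_eq_abs]
    rcases le_or_gt (v ω - m) 0 with h | h
    · rw [max_eq_left h, abs_zero]
      have : (0:ℝ) ≤ vmax := le_trans h0 h1.le
      linarith [abs_nonneg m]
    · rw [max_eq_right h.le]; exact h2
  -- rewrite Ghat G m as an integral of a constant
  have hconst : Ghat G m = ∫ _ : Ω, Ghat G m ∂μ := by
    simp [integral_const]
  rw [hconst, ← integral_sub hf_int (integrable_const _)]
  exact integral_mono (hf_int.sub (integrable_const _)) hg_int
    (fun ω => Ghat_sub_le hmono hbd (v ω) m)
end

section
/- Let v be a real-valued random variable with values in [vmin, vmax] where 0 ≤ vmin < vmax, and define G*(r) := 1 if r > E[v] and G*(r) := 0 otherwise. Then Ĝ*(x) = max(0, x − E[v]) for every x ≥ 0, and consequently E[Ĝ*(v)] − Ĝ*(E[v]) = E[max(0, v − E[v])], i.e., the step cdf G* attains the maximal net utility E[max(0, v − E[v])]. -/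
open MeasureTheory Set

/-! The step function `r ↦ 1_{r > m}` has antiderivative `x ↦ max x m`, so for `m = E[v] ≥ 0`
its integral from `0` is `(x - m)⁺` for every `x`; in particular `Ĝ*(E[v]) = 0`. -/

lemma monotone_step (m : ℝ) : Monotone fun r : ℝ => if m < r then (1 : ℝ) else 0 := by
  intro a b hab
  dsimp only
  split_ifs with ha hb <;> norm_num
  exact hb (ha.trans_le hab)

lemma integral_step_from_threshold (m y : ℝ) :
    ∫ r in m..y, (if m < r then (1 : ℝ) else 0) = max y m - m := by
  rcases le_total m y with hmy | hym
  · have hone : ∫ r in m..y, (if m < r then (1 : ℝ) else 0) = ∫ r in m..y, (1 : ℝ) :=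
      intervalIntegral.integral_congr_ae <| .of_forall fun r hr => by
        rw [uIoc_of_le hmy] at hr
        exact if_pos hr.1
    simp [hone, hmy]
  · have hzero : ∫ r in m..y, (if m < r then (1 : ℝ) else 0) = ∫ r in m..y, (0 : ℝ) :=
      intervalIntegral.integral_congr_ae <| .of_forall fun r hr => by
        rw [uIoc_of_ge hym] at hr
        exact if_neg hr.2.not_gt
    simp [hzero, hym]

lemma integral_step (m a b : ℝ) :
    ∫ r in a..b, (if m < r then (1 : ℝ) else 0) = max b m - max a m := by
  rw [← intervalIntegral.integral_interval_sub_left ((monotone_step m).intervalIntegrable)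
    ((monotone_step m).intervalIntegrable), integral_step_from_threshold,
    integral_step_from_threshold]
  ring

lemma Ghat_step {m : ℝ} (hm : 0 ≤ m) (x : ℝ) :
    Ghat (fun r => if m < r then 1 else 0) x = max 0 (x - m) := by
  rw [Ghat, integral_step, max_eq_right hm, ← max_sub_sub_right, sub_self, max_comm]

theorem step_cdf_attains_max_net_utility_general
    {Ω : Type*} [MeasurableSpace Ω] (μ : Measure Ω) [IsProbabilityMeasure μ]
    (vmin vmax : ℝ) (h0 : 0 ≤ vmin)
    (v : Ω → ℝ) (hv : ∀ ω, v ω ∈ Icc vmin vmax)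
    (Gstar : ℝ → ℝ)
    (hGstar : Gstar = fun r => if (∫ ω, v ω ∂μ) < r then 1 else 0) :
    (∀ x : ℝ, 0 ≤ x → Ghat Gstar x = max 0 (x - ∫ ω, v ω ∂μ)) ∧
      (∫ ω, Ghat Gstar (v ω) ∂μ) - Ghat Gstar (∫ ω, v ω ∂μ)
        = ∫ ω, max 0 (v ω - ∫ ω', v ω' ∂μ) ∂μ := by
  have hmean : 0 ≤ ∫ ω, v ω ∂μ := integral_nonneg fun ω => h0.trans (hv ω).1
  subst hGstar
  refine ⟨fun x _ => Ghat_step hmean x, ?_⟩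
  simp only [Ghat_step hmean, sub_self, max_self, sub_zero]

/-- For the step cdf `G*(r) := 1` if `r > E[v]` and `0` otherwise:
`Ĝ*(x) = max(0, x − E[v])` for every `x ≥ 0`, and consequently
`E[Ĝ*(v)] − Ĝ*(E[v]) = E[max(0, v − E[v])]`, i.e. `G*` attains the maximal
net utility `E[max(0, v − E[v])]`. -/
theorem step_cdf_attains_max_net_utility
    {Ω : Type*} [MeasurableSpace Ω] (μ : Measure Ω) [IsProbabilityMeasure μ]
    (vmin vmax : ℝ) (h0 : 0 ≤ vmin) (h1 : vmin < vmax)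
    (v : Ω → ℝ) (hv : ∀ ω, v ω ∈ Icc vmin vmax) (hmv : Measurable v)
    (Gstar : ℝ → ℝ)
    (hGstar : Gstar = fun r => if (∫ ω, v ω ∂μ) < r then 1 else 0) :
    (∀ x : ℝ, 0 ≤ x → Ghat Gstar x = max 0 (x - ∫ ω, v ω ∂μ)) ∧
      (∫ ω, Ghat Gstar (v ω) ∂μ) - Ghat Gstar (∫ ω, v ω ∂μ)
        = ∫ ω, max 0 (v ω - ∫ ω', v ω' ∂μ) ∂μ :=
  step_cdf_attains_max_net_utility_general μ vmin vmax h0 v hv Gstar hGstar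
end

section
/- Let μ be a finite Borel measure on ℝ and let w ∈ ℝ. Then the function b ↦ ∫_{(−∞, b]} (w − r) dμ(r) attains its global maximum at b = w; i.e., for every b ∈ ℝ, ∫_{(−∞, b]} (w − r) dμ(r) ≤ ∫_{(−∞, w]} (w − r) dμ(r). Moreover, if μ is bounded below by ε times Lebesgue measure on [vmin, vmax] for some ε > 0, and w, b ∈ [vmin, vmax] with b ≠ w, then the inequality is strict. (In Mechanism 1, bidding b = w is a strictly dominant strategy for an agent whose value estimate is w.) -/
open MeasureTheory Set

lemma split_Iic (μ : Measure ℝ) (f : ℝ → ℝ) (hf : Integrable f μ) {a c : ℝ} (h : a ≤ c) :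
    ∫ r in Iic c, f r ∂μ = ∫ r in Iic a, f r ∂μ + ∫ r in Ioc a c, f r ∂μ := by
  rw [← Iic_union_Ioc_eq_Iic h,
    setIntegral_union (by simp [Set.disjoint_left]; intro x h1 h2; linarith) measurableSet_Ioc
      hf.integrableOn hf.integrableOn]

/-- For a finite Borel measure `μ` on `ℝ` and `w ∈ ℝ`, the function
`b ↦ ∫_{(−∞, b]} (w − r) dμ(r)` attains its global maximum at `b = w`.
Moreover, if `μ` is bounded below by `ε` times Lebesgue measure on
`[vmin, vmax]` for some `ε > 0`, and `w, b ∈ [vmin, vmax]` with `b ≠ w`, then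
the inequality is strict.  (Bidding `b = w` is a strictly dominant strategy.) -/
theorem bid_true_value_dominant
    (μ : Measure ℝ) [IsFiniteMeasure μ] (w : ℝ)
    (hint : Integrable (fun r : ℝ => r) μ) :
    (∀ b : ℝ, ∫ r in Iic b, (w - r) ∂μ ≤ ∫ r in Iic w, (w - r) ∂μ) ∧
    (∀ ε vmin vmax : ℝ, 0 < ε →
      (ENNReal.ofReal ε) • volume.restrict (Icc vmin vmax) ≤ μ →
      ∀ b : ℝ, b ∈ Icc vmin vmax → w ∈ Icc vmin vmax → b ≠ w →
        ∫ r in Iic b, (w - r) ∂μ < ∫ r in Iic w, (w - r) ∂μ) := by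
  have hI : Integrable (fun r : ℝ => w - r) μ := (integrable_const w).sub hint
  constructor
  · intro b
    rcases le_total b w with h | h
    · rw [split_Iic μ _ hI h]
      have : 0 ≤ ∫ r in Ioc b w, (w - r) ∂μ :=
        setIntegral_nonneg measurableSet_Ioc (fun r hr => by linarith [hr.2])
      linarith
    · rw [split_Iic μ _ hI h]
      have : ∫ r in Ioc w b, (w - r) ∂μ ≤ 0 :=
        setIntegral_nonpos measurableSet_Ioc (fun r hr => by linarith [hr.1])
      linarith
  · intro ε vmin vmax hε hle b hb hw hne
    have key : ∀ a c : ℝ, a < c → a ∈ Icc vmin vmax → c ∈ Icc vmin vmax →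
        0 < μ (Ioo a c) := by
      intro a c hac ha hc
      have hsub : Ioo a c ⊆ Icc vmin vmax := fun x hx =>
        ⟨le_trans ha.1 hx.1.le, le_trans hx.2.le hc.2⟩
      have h1 : ((ENNReal.ofReal ε) • volume.restrict (Icc vmin vmax)) (Ioo a c) ≤
          μ (Ioo a c) := hle _
      have h2 : ((ENNReal.ofReal ε) • volume.restrict (Icc vmin vmax)) (Ioo a c)
          = ENNReal.ofReal ε * ENNReal.ofReal (c - a) := by
        rw [Measure.smul_apply, Measure.restrict_apply measurableSet_Ioo,
          inter_eq_self_of_subset_left hsub, Real.volume_Ioo]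
        rfl
      refine lt_of_lt_of_le ?_ h1
      rw [h2]
      exact ENNReal.mul_pos (by simp [hε, ENNReal.ofReal_pos])
        (by simp [ENNReal.ofReal_pos]; linarith)
    rcases lt_or_gt_of_ne hne with h | h
    · rw [split_Iic μ _ hI h.le]
      have hnn : 0 ≤ᵐ[μ.restrict (Ioc b w)] fun r : ℝ => w - r := by
        filter_upwards [ae_restrict_mem measurableSet_Ioc] with r hr
        simpa using sub_nonneg.mpr hr.2
      have hpos : 0 < ∫ r in Ioc b w, (w - r) ∂μ := by
        rw [setIntegral_pos_iff_support_of_nonneg_ae hnn hI.integrableOn]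
        refine lt_of_lt_of_le (key b w h hb hw) (measure_mono fun x hx => ?_)
        refine ⟨?_, ⟨hx.1, hx.2.le⟩⟩
        simp only [Function.mem_support]
        intro hc
        have : x = w := by linarith [sub_eq_zero.mp hc]
        exact absurd this (ne_of_lt hx.2)
      linarith
    · rw [split_Iic μ _ hI h.le]
      have hI' : Integrable (fun r : ℝ => r - w) μ := hint.sub (integrable_const w)
      have hnn : 0 ≤ᵐ[μ.restrict (Ioc w b)] fun r : ℝ => r - w := by
        filter_upwards [ae_restrict_mem measurableSet_Ioc] with r hr
        simpa using sub_nonneg.mpr hr.1.le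
      have hpos : 0 < ∫ r in Ioc w b, (r - w) ∂μ := by
        rw [setIntegral_pos_iff_support_of_nonneg_ae hnn hI'.integrableOn]
        refine lt_of_lt_of_le (key w b h hw hb) (measure_mono fun x hx => ?_)
        refine ⟨?_, ⟨hx.1, hx.2.le⟩⟩
        simp only [Function.mem_support]
        intro hc
        have : x = w := by linarith [sub_eq_zero.mp hc]
        exact absurd this (ne_of_gt hx.1)
      have heq : ∫ r in Ioc w b, (w - r) ∂μ = - ∫ r in Ioc w b, (r - w) ∂μ := by
        rw [← integral_neg]
        congr 1
        ext r
        ring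
      linarith
end

section
/- Let v_p be uniformly distributed on [0, 2M] with M > 0, let v_a = a·v_p for a constant a > 0, and let 0 < c' ≤ a·M/4. Set p := c'/(a·M/4) and G_{c'}(r) := p·1_{r > E[v_a]} + (1 − p)·1_{r ≥ 2aM}. Then the principal's expected loss E[Ĝ_{c'}(v_a)] + E[(v_p − v_a)·G_{c'}(v_a)] equals (3/a − 2)·c'. -/
open MeasureTheory Set

lemma mono_lt (c : ℝ) : Monotone (fun r : ℝ => if c < r then (1:ℝ) else 0) := by
  intro r s h; dsimp only; split_ifs with h1 h2 <;> norm_num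
  exact h2 (h1.trans_le h)

lemma mono_le (c : ℝ) : Monotone (fun r : ℝ => if c ≤ r then (1:ℝ) else 0) := by
  intro r s h; dsimp only; split_ifs with h1 h2 <;> norm_num
  exact h2 (h1.trans h)

lemma intble_lt (c u v : ℝ) : IntervalIntegrable (fun r : ℝ => if c < r then (1:ℝ) else 0) volume u v :=
  (mono_lt c).intervalIntegrable

lemma intble_le (c u v : ℝ) : IntervalIntegrable (fun r : ℝ => if c ≤ r then (1:ℝ) else 0) volume u v :=
  (mono_le c).intervalIntegrable

lemma int_ind_lt (c y : ℝ) (hc : 0 < c) :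
    ∫ r in (0:ℝ)..y, (if c < r then (1:ℝ) else 0) = max 0 (y - c) := by
  by_cases h : y ≤ c
  · rw [intervalIntegral.integral_congr (g := fun _ => (0:ℝ))
      (fun r hr => if_neg (not_lt.2 ((hr.2.trans ?_))))]
    · simp [max_eq_left (sub_nonpos.2 h)]
    · simp only [max_le_iff]; exact ⟨hc.le, h⟩
  · push_neg at h
    rw [← intervalIntegral.integral_add_adjacent_intervals (b := c) (intble_lt c 0 c) (intble_lt c c y)]
    have h1 : ∫ r in (0:ℝ)..c, (if c < r then (1:ℝ) else 0) = 0 := by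
      rw [intervalIntegral.integral_congr (g := fun _ => (0:ℝ))
        (fun r hr => if_neg (not_lt.2 ?_))]
      · simp
      · have := hr.2; simpa [hc.le] using this
    have h2 : ∫ r in (c:ℝ)..y, (if c < r then (1:ℝ) else 0) = y - c := by
      rw [intervalIntegral.integral_congr_ae (g := fun _ => (1:ℝ))
        (Filter.Eventually.of_forall (fun r hr => ?_))]
      · simp
      · rw [uIoc_of_le h.le] at hr; exact if_pos hr.1
    rw [h1, h2, zero_add, max_eq_right (by linarith)]

lemma int_ind_le (c y : ℝ) (hc : 0 < c) :
    ∫ r in (0:ℝ)..y, (if c ≤ r then (1:ℝ) else 0) = max 0 (y - c) := by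
  rw [← int_ind_lt c y hc]
  apply intervalIntegral.integral_congr_ae
  have hne : ∀ᵐ r : ℝ, r ≠ c := by
    filter_upwards [compl_mem_ae_iff.2 (measure_singleton c)] with r hr
    simpa using hr
  filter_upwards [hne] with r hr _
  rcases lt_trichotomy r c with h | h | h
  · rw [if_neg (not_le.2 h), if_neg (not_lt.2 h.le)]
  · exact absurd h hr
  · rw [if_pos h.le, if_pos h]

lemma Ghat_eval' (p a M : ℝ) (ha : 0 < a) (hM : 0 < M) (y : ℝ) :
    (∫ r in (0:ℝ)..y, (p * (if a * M < r then (1:ℝ) else 0)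
      + (1 - p) * (if 2 * a * M ≤ r then (1:ℝ) else 0)))
    = p * max 0 (y - a * M) + (1 - p) * max 0 (y - 2 * a * M) := by
  rw [intervalIntegral.integral_add ((intble_lt _ _ _).const_mul p)
      ((intble_le _ _ _).const_mul (1 - p)),
    intervalIntegral.integral_const_mul, intervalIntegral.integral_const_mul,
    int_ind_lt _ _ (by positivity), int_ind_le _ _ (by positivity)]


/-- Let `v_p` be uniform on `[0, 2M]`, `v_a = a·v_p`, `0 < c' ≤ aM/4`,
`p := c'/(aM/4)` and `G_{c'}(r) := p·1_{r > aM} + (1 − p)·1_{r ≥ 2aM}`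
(note `E[v_a] = aM`).  Then the principal's expected loss
`E[Ĝ_{c'}(v_a)] + E[(v_p − v_a)·G_{c'}(v_a)]` equals `(3/a − 2)·c'`. -/
theorem fully_correlated_loss
    (M a c' : ℝ) (hM : 0 < M) (ha : 0 < a)
    (hc'0 : 0 < c') (hc' : c' ≤ a * M / 4)
    (ν : Measure ℝ)
    (hν : ν = (ENNReal.ofReal (2 * M))⁻¹ • volume.restrict (Icc 0 (2 * M)))
    (p : ℝ) (hp : p = c' / (a * M / 4))
    (G : ℝ → ℝ)
    (hG : G = fun r => p * (if a * M < r then 1 else 0)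
      + (1 - p) * (if 2 * a * M ≤ r then 1 else 0)) :
    (∫ x, Ghat G (a * x) ∂ν) + (∫ x, (x - a * x) * G (a * x) ∂ν)
      = (3 / a - 2) * c' := by
  subst hν hG
  have h2M : (0:ℝ) < 2 * M := by linarith
  rw [integral_smul_measure, integral_smul_measure, ENNReal.toReal_inv,
    ENNReal.toReal_ofReal h2M.le, smul_eq_mul, smul_eq_mul]
  have key1 : ∫ x in Icc (0:ℝ) (2*M),
      Ghat (fun r => p * (if a * M < r then 1 else 0)
        + (1 - p) * (if 2 * a * M ≤ r then 1 else 0)) (a * x)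
      = p * (a * M^2 / 2) := by
    rw [integral_Icc_eq_integral_Ioc, ← intervalIntegral.integral_of_le h2M.le]
    rw [intervalIntegral.integral_congr (g := fun x => p * max 0 (a*x - a*M)) ?_]
    · rw [intervalIntegral.integral_const_mul]
      have hsplit : ∫ x in (0:ℝ)..(2*M), max 0 (a*x - a*M) = a * M^2 / 2 := by
        have hcont : Continuous (fun x : ℝ => max 0 (a*x - a*M)) :=
          continuous_const.max ((continuous_const.mul continuous_id).sub continuous_const)
        rw [← intervalIntegral.integral_add_adjacent_intervals (b := M)
          (hcont.intervalIntegrable _ _) (hcont.intervalIntegrable _ _)]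
        have e1 : ∫ x in (0:ℝ)..M, max 0 (a*x - a*M) = 0 := by
          rw [intervalIntegral.integral_congr (g := fun _ => (0:ℝ)) ?_]
          · simp
          · intro x hx
            rw [uIcc_of_le hM.le] at hx
            exact max_eq_left (by nlinarith [mul_nonneg ha.le (sub_nonneg.2 hx.2)])
        have e2 : ∫ x in M..(2*M), max 0 (a*x - a*M) = a * M^2 / 2 := by
          rw [intervalIntegral.integral_congr (g := fun x => a*x - a*M) ?_]
          · have i1 : IntervalIntegrable (fun x : ℝ => a*x) volume M (2*M) :=
              (by continuity : Continuous fun x : ℝ => a*x).intervalIntegrable _ _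
            rw [intervalIntegral.integral_sub i1 intervalIntegrable_const,
              intervalIntegral.integral_const_mul, integral_id,
              intervalIntegral.integral_const, smul_eq_mul]
            ring
          · intro x hx
            rw [uIcc_of_le (by linarith)] at hx
            exact max_eq_right (by nlinarith [mul_nonneg ha.le (sub_nonneg.2 hx.1)])
        rw [e1, e2, zero_add]
      rw [hsplit]
    · intro x hx
      rw [uIcc_of_le h2M.le] at hx
      have hGh : Ghat (fun r => p * (if a * M < r then 1 else 0)
          + (1 - p) * (if 2 * a * M ≤ r then 1 else 0)) (a * x)
          = p * max 0 (a*x - a*M) + (1-p) * max 0 (a*x - 2*a*M) := by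
        simpa [Ghat] using Ghat_eval' p a M ha hM (a*x)
      simp only [hGh,
        max_eq_left (show a*x - 2*a*M ≤ 0 by
          nlinarith [mul_nonneg ha.le (sub_nonneg.2 hx.2)]),
        mul_zero, add_zero]
  have key2 : ∫ x in Icc (0:ℝ) (2*M),
      (x - a*x) * ((fun r => p * (if a * M < r then 1 else 0)
        + (1 - p) * (if 2 * a * M ≤ r then 1 else 0)) (a * x))
      = (1-a) * p * (3 * M^2 / 2) := by
    rw [integral_Icc_eq_integral_Ioc, ← intervalIntegral.integral_of_le h2M.le]
    rw [intervalIntegral.integral_congr_ae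
      (g := fun x => ((x - a*x) * p) * (if M < x then 1 else 0)) ?_]
    · have hint : ∀ u v : ℝ, IntervalIntegrable
          (fun x => ((x - a*x) * p) * (if M < x then (1:ℝ) else 0)) volume u v := by
        intro u v
        exact (intble_lt M u v).continuousOn_mul
          (((continuous_id.sub (continuous_const.mul continuous_id)).mul
            continuous_const).continuousOn)
      rw [← intervalIntegral.integral_add_adjacent_intervals (b := M) (hint 0 M) (hint M (2*M))]
      have e1 : ∫ x in (0:ℝ)..M, ((x - a*x) * p) * (if M < x then (1:ℝ) else 0) = 0 := by
        rw [intervalIntegral.integral_congr (g := fun _ => (0:ℝ)) ?_]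
        · simp
        · intro x hx
          rw [uIcc_of_le hM.le] at hx
          simp only [if_neg (not_lt.2 hx.2), mul_zero]
      have e2 : ∫ x in M..(2*M), ((x - a*x) * p) * (if M < x then (1:ℝ) else 0)
          = (1-a) * p * (3 * M^2 / 2) := by
        rw [intervalIntegral.integral_congr_ae (g := fun x => ((1-a) * p) * x)
          (Filter.Eventually.of_forall (fun x hx => ?_))]
        · rw [intervalIntegral.integral_const_mul, integral_id]
          ring
        · rw [uIoc_of_le (by linarith)] at hx
          simp only [if_pos hx.1]; ring
      rw [e1, e2, zero_add]
    · have hne : ∀ᵐ x : ℝ, x ≠ 2*M := by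
        filter_upwards [compl_mem_ae_iff.2 (measure_singleton (2*M))] with x hx
        simpa using hx
      filter_upwards [hne] with x hx hmem
      rw [uIoc_of_le h2M.le] at hmem
      have hx2 : ¬ (2*a*M ≤ a*x) := by
        have hxlt : x < 2*M := lt_of_le_of_ne hmem.2 hx
        nlinarith [mul_pos ha (sub_pos.2 hxlt)]
      have hcond : (a*M < a*x) = (M < x) := propext (mul_lt_mul_iff_right₀ ha)
      simp only [hcond, if_neg hx2, mul_zero, add_zero]
      ring
  rw [key1, key2, hp]
  have ha' : a ≠ 0 := ne_of_gt ha
  have hM' : M ≠ 0 := ne_of_gt hM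
  field_simp
  ring
end

section
/- Let G : ℝ → ℝ be a nondecreasing locally integrable function, fix vmin ∈ ℝ, and define Ĝ(b) := ∫_{vmin}^b G(r) dr. Then for every v ∈ ℝ, the function h(b) := G(b)·(v − b) + Ĝ(b) attains its global maximum over b ∈ ℝ at b = v; i.e., h(b) ≤ h(v) for all b. (In the first-price-style Mechanism 2, where an agent bidding b receives the object with probability G(b) at price b − Ĝ(b)/G(b), bidding the true value v is optimal.) -/
open MeasureTheory Set

/-- For a nondecreasing locally integrable `G : ℝ → ℝ` and
`Ĝ(b) := ∫_{vmin}^b G(r) dr`, the function `h(b) := G(b)·(v − b) + Ĝ(b)`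
attains its global maximum at `b = v`: `h(b) ≤ h(v)` for all `b`.
(In the first-price-style Mechanism 2, bidding the true value `v` is optimal.) -/
theorem first_price_bid_true_value_optimal
    (G : ℝ → ℝ) (hmono : Monotone G)
    (hloc : LocallyIntegrable G volume) (vmin : ℝ) :
    ∀ v b : ℝ,
      G b * (v - b) + (∫ r in vmin..b, G r)
        ≤ G v * (v - v) + (∫ r in vmin..v, G r) := by
  intro v b
  have hint : ∀ x y : ℝ, IntervalIntegrable G volume x y := fun x y =>
    hmono.intervalIntegrable
  have hsplit : (∫ r in vmin..v, G r) =
      (∫ r in vmin..b, G r) + (∫ r in b..v, G r) :=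
    (intervalIntegral.integral_add_adjacent_intervals (hint vmin b) (hint b v)).symm
  rw [hsplit]
  have key : G b * (v - b) ≤ ∫ r in b..v, G r := by
    rcases le_total b v with h | h
    · calc G b * (v - b) = ∫ _ in b..v, G b := by
            rw [intervalIntegral.integral_const, smul_eq_mul, mul_comm]
        _ ≤ ∫ r in b..v, G r := by
            apply intervalIntegral.integral_mono_on h intervalIntegrable_const (hint b v)
            intro x hx
            exact hmono hx.1
    · have : (∫ r in b..v, G r) = -(∫ r in v..b, G r) :=
        (intervalIntegral.integral_symm v b)
      rw [this]
      have h1 : (∫ r in v..b, G r) ≤ ∫ _ in v..b, G b := by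
        apply intervalIntegral.integral_mono_on h (hint v b) intervalIntegrable_const
        intro x hx
        exact hmono hx.2
      rw [intervalIntegral.integral_const, smul_eq_mul] at h1
      nlinarith
  linarith
end

section
/- Let v_a be a real-valued random variable with values in [vmin, vmax], 0 ≤ vmin < vmax, let p ∈ [0,1] and t = E[v_a], and define G(r) := p·1_{r > t}. Then the agent's cooperative utility E[Ĝ(v_a)] equals p·E[max(0, v_a − E[v_a])], his heuristic utility Ĝ(E[v_a]) equals 0, and hence the net utility equals p·E[max(0, v_a − E[v_a])]; in particular, for a computation cost c ≥ 0, the net utility strictly exceeds c if and only if p > c / E[max(0, v_a − E[v_a])] (assuming E[max(0, v_a − E[v_a])] > 0). (This is the truthfulness condition for the posted-price Mechanism 3 with posted price t = E[v_a] and sale probability p.) -/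
open MeasureTheory Set

lemma step_mono (t : ℝ) : Monotone (fun r : ℝ => if t < r then (1:ℝ) else 0) := by
  intro a b hab
  by_cases ha : t < a
  · simp [ha, lt_of_lt_of_le ha hab]
  · by_cases hb : t < b <;> simp [ha, hb]

lemma step_integral (t x : ℝ) (ht : 0 ≤ t) (hx : 0 ≤ x) :
    (∫ r in (0:ℝ)..x, (if t < r then (1:ℝ) else 0)) = max 0 (x - t) := by
  by_cases h : x ≤ t
  · rw [max_eq_left (by linarith)]
    rw [intervalIntegral.integral_congr (g := fun _ => (0:ℝ))]
    · simp
    · intro r hr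
      rw [uIcc_of_le hx] at hr
      have : ¬ t < r := by
        simp only [mem_Icc] at hr; push_neg; linarith [hr.2]
      simp [this]
  · push_neg at h
    have hint1 : IntervalIntegrable (fun r : ℝ => if t < r then (1:ℝ) else 0)
        volume 0 t := (step_mono t).intervalIntegrable
    have hint2 : IntervalIntegrable (fun r : ℝ => if t < r then (1:ℝ) else 0)
        volume t x := (step_mono t).intervalIntegrable
    rw [← intervalIntegral.integral_add_adjacent_intervals hint1 hint2]
    have e1 : (∫ r in (0:ℝ)..t, (if t < r then (1:ℝ) else 0)) = 0 := by
      rw [intervalIntegral.integral_congr (g := fun _ => (0:ℝ))]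
      · simp
      · intro r hr
        rw [uIcc_of_le ht] at hr
        have : ¬ t < r := by
          simp only [mem_Icc] at hr; push_neg; linarith [hr.2]
        simp [this]
    have e2 : (∫ r in t..x, (if t < r then (1:ℝ) else 0)) = x - t := by
      rw [intervalIntegral.integral_congr_ae (g := fun _ => (1:ℝ))]
      · simp
      · filter_upwards with r hr
        rw [uIoc_of_le h.le] at hr
        simp [hr.1]
    rw [e1, e2, max_eq_right (by linarith)]; ring

lemma Ghat_eq (p t : ℝ) (ht : 0 ≤ t) (x : ℝ) (hx : 0 ≤ x) :
    Ghat (fun r => p * (if t < r then 1 else 0)) x = p * max 0 (x - t) := by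
  unfold Ghat
  rw [intervalIntegral.integral_const_mul, step_integral t x ht hx]

/-- For the posted-price mechanism with price `t = E[v_a]` and sale probability
`p`, i.e. `G(r) := p·1_{r > t}`: the cooperative utility `E[Ĝ(v_a)]` equals
`p·E[max(0, v_a − E[v_a])]`, the heuristic utility `Ĝ(E[v_a])` equals `0`,
hence the net utility equals `p·E[max(0, v_a − E[v_a])]`; in particular, for a
computation cost `c ≥ 0`, the net utility strictly exceeds `c` if and only if
`p > c / E[max(0, v_a − E[v_a])]` (assuming `E[max(0, v_a − E[v_a])] > 0`). -/
theorem posted_price_truthfulness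
    {Ω : Type*} [MeasurableSpace Ω] (μ : Measure Ω) [IsProbabilityMeasure μ]
    (vmin vmax : ℝ) (h0 : 0 ≤ vmin) (h1 : vmin < vmax)
    (va : Ω → ℝ) (hva : ∀ ω, va ω ∈ Icc vmin vmax) (hmva : Measurable va)
    (p : ℝ) (hp : p ∈ Icc (0 : ℝ) 1)
    (t : ℝ) (ht : t = ∫ ω, va ω ∂μ)
    (G : ℝ → ℝ) (hG : G = fun r => p * (if t < r then 1 else 0))
    (c : ℝ) (hc : 0 ≤ c)
    (hK : 0 < ∫ ω, max 0 (va ω - ∫ ω', va ω' ∂μ) ∂μ) :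
    (∫ ω, Ghat G (va ω) ∂μ
        = p * ∫ ω, max 0 (va ω - ∫ ω', va ω' ∂μ) ∂μ) ∧
    Ghat G (∫ ω, va ω ∂μ) = 0 ∧
    ((∫ ω, Ghat G (va ω) ∂μ) - Ghat G (∫ ω, va ω ∂μ)
        = p * ∫ ω, max 0 (va ω - ∫ ω', va ω' ∂μ) ∂μ) ∧
    ((c < (∫ ω, Ghat G (va ω) ∂μ) - Ghat G (∫ ω, va ω ∂μ))
        ↔ c / (∫ ω, max 0 (va ω - ∫ ω', va ω' ∂μ) ∂μ) < p) := by
  have hva0 : ∀ ω, 0 ≤ va ω := fun ω => le_trans h0 (hva ω).1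
  have ht0 : 0 ≤ t := by
    rw [ht]; exact integral_nonneg hva0
  have hGhat : ∀ x, 0 ≤ x → Ghat G x = p * max 0 (x - t) := by
    intro x hx; rw [hG]; exact Ghat_eq p t ht0 x hx
  have hcoop : (∫ ω, Ghat G (va ω) ∂μ)
      = p * ∫ ω, max 0 (va ω - ∫ ω', va ω' ∂μ) ∂μ := by
    have : (fun ω => Ghat G (va ω)) = fun ω => p * max 0 (va ω - ∫ ω', va ω' ∂μ) := by
      funext ω; rw [hGhat (va ω) (hva0 ω), ht]
    rw [this, MeasureTheory.integral_const_mul]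
  have hheur : Ghat G (∫ ω, va ω ∂μ) = 0 := by
    rw [← ht, hGhat t ht0]; simp
  refine ⟨hcoop, hheur, by rw [hcoop, hheur]; ring, ?_⟩
  rw [hcoop, hheur, sub_zero, div_lt_iff₀ hK, mul_comm]
end
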